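/- arXiv:1302.3634 — 7 statements merged into one kernel-verified Lean document; each statement's English description precedes it below -/
import Mathlib

section
/- Let V be a finite-dimensional real vector space, J : V → V a linear map with J ∘ J = -id, and g a nondegenerate symmetric bilinear form with g(JX, JY) = g(X, Y) for all X, Y (the indefinite Hermitian compatibility). Let H ⊆ V be a hyperplane whose radical Rad_g H = H ∩ H^⊥ᵍ is nonzero, spanned by a vector ξ. Then Jξ ∈ H and Jξ ∉ span{ξ}; consequently J(Rad_g H) is a one-dimensional subspace contained in H with J(Rad_g H) ∩ Rad_g H = {0}, so no lightlike hyperplane of an indefinite Hermitian space is radical transversal. -/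
/-!
Since `ξ` is `g`-orthogonal to the hyperplane `H` and `g` is nondegenerate, `H` is the kernel of
the nonzero functional `g ξ`. Compatibility of `g` with `J` makes `g x (J x)` antisymmetric in
the sense `g x (J x) = -g (J x) x`, so `g ξ (J ξ) = 0` and `J ξ ∈ H`. A real complex structure
has no real eigenvalue, so `J ξ ∉ ℝ ∙ ξ`; the remaining claims follow since
`J (Rad_g H) = ℝ ∙ J ξ`.
-/

open Module

/-- The `b`-orthogonal complement of a subspace `W`:
`W^⊥ᵇ = {v ∈ V : b(v, w) = 0 for all w ∈ W}`. -/
def orthComp {V : Type*} [AddCommGroup V] [Module ℝ V]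
    (b : V →ₗ[ℝ] V →ₗ[ℝ] ℝ) (W : Submodule ℝ V) : Submodule ℝ V where
  carrier := {v : V | ∀ w ∈ W, b v w = 0}
  zero_mem' := by intro w hw; simp
  add_mem' := by
    intro x y hx hy w hw
    simp [map_add, LinearMap.add_apply, hx w hw, hy w hw]
  smul_mem' := by
    intro c x hx w hw
    simp [map_smul, LinearMap.smul_apply, hx w hw]

theorem Submodule.eq_ker_of_le_ker_of_finrank_eq_add_one {K V : Type*} [DivisionRing K]
    [AddCommGroup V] [Module K V] [FiniteDimensional K V] {H : Submodule K V} {f : Dual K V}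
    (hf : f ≠ 0) (hle : H ≤ LinearMap.ker f) (hH : finrank K V = finrank K H + 1) :
    H = LinearMap.ker f :=
  Submodule.eq_of_le_of_finrank_eq hle (by
    have := Dual.finrank_ker_add_one_of_ne_zero hf
    omega)

theorem apply_self_apply_eq_zero_of_isometry {R V : Type*} [CommRing R] [NoZeroDivisors R]
    [CharZero R] [AddCommGroup V] [Module R V] {J : V →ₗ[R] V} (hJ : ∀ x, J (J x) = -x)
    {g : V →ₗ[R] V →ₗ[R] R} (hsymm : ∀ x y, g x y = g y x)
    (hHerm : ∀ x y, g (J x) (J y) = g x y) (x : V) :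
    g x (J x) = 0 := by
  have h := hHerm (J x) x
  rw [hJ, map_neg, LinearMap.neg_apply, hsymm (J x) x, neg_eq_iff_eq_neg] at h
  exact self_eq_neg.mp h

theorem apply_notMem_span_singleton_of_sq_eq_neg_one {K V : Type*} [Field K] [LinearOrder K]
    [IsStrictOrderedRing K] [AddCommGroup V] [Module K V] {J : V →ₗ[K] V}
    (hJ : ∀ x, J (J x) = -x) {x : V} (hx : x ≠ 0) :
    J x ∉ K ∙ x := by
  intro hJx
  obtain ⟨c, hc⟩ := Submodule.mem_span_singleton.mp hJx
  have hsq : (c * c + 1) • x = 0 := by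
    rw [add_smul, one_smul, mul_smul, hc, ← map_smul, hc, hJ, neg_add_cancel]
  have hpos : c * c + 1 ≠ 0 := (add_pos_of_nonneg_of_pos (mul_self_nonneg c) one_pos).ne'
  exact hx ((smul_eq_zero.mp hsq).resolve_left hpos)

/-- In an indefinite Hermitian space (`g(JX, JY) = g(X, Y)`), a
lightlike hyperplane `H` with radical `Rad_g H = H ⊓ H^⊥ᵍ` spanned by `ξ ≠ 0`
satisfies `Jξ ∈ H` and `Jξ ∉ span{ξ}`; consequently `J(Rad_g H)` is a one-dimensional
subspace contained in `H` meeting `Rad_g H` trivially, so no lightlike hyperplane of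
an indefinite Hermitian space is radical transversal. -/
theorem statement2 {V : Type*} [AddCommGroup V] [Module ℝ V] [FiniteDimensional ℝ V]
    (J : V →ₗ[ℝ] V) (hJ : ∀ x : V, J (J x) = -x)
    (g : V →ₗ[ℝ] V →ₗ[ℝ] ℝ)
    (hsymm : ∀ x y : V, g x y = g y x)
    (hnd : ∀ x : V, (∀ y : V, g x y = 0) → x = 0)
    (hHerm : ∀ x y : V, g (J x) (J y) = g x y)
    (H : Submodule ℝ V) (hH : finrank ℝ V = finrank ℝ H + 1)
    (ξ : V) (hξ : ξ ≠ 0)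
    (hrad : H ⊓ orthComp g H = Submodule.span ℝ {ξ}) :
    J ξ ∈ H ∧ J ξ ∉ Submodule.span ℝ {ξ} ∧
    Submodule.map J (H ⊓ orthComp g H) ≤ H ∧
    finrank ℝ (Submodule.map J (H ⊓ orthComp g H)) = 1 ∧
    Submodule.map J (H ⊓ orthComp g H) ⊓ (H ⊓ orthComp g H) = ⊥ := by
  have hξrad : ξ ∈ H ⊓ orthComp g H := hrad ▸ Submodule.mem_span_singleton_self ξ
  have hgξ : g ξ ≠ 0 := fun h => hξ (hnd ξ fun y => by simp [h])
  have hker : H = LinearMap.ker (g ξ) :=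
    H.eq_ker_of_le_ker_of_finrank_eq_add_one hgξ (fun w hw => hξrad.2 w hw) hH
  have hJξH : J ξ ∈ H := hker ▸ apply_self_apply_eq_zero_of_isometry hJ hsymm hHerm ξ
  have hJξ : J ξ ∉ ℝ ∙ ξ := apply_notMem_span_singleton_of_sq_eq_neg_one hJ hξ
  have hmap : Submodule.map J (H ⊓ orthComp g H) = ℝ ∙ J ξ := by
    rw [hrad, Submodule.map_span, Set.image_singleton]
  rw [hmap, hrad]
  exact ⟨hJξH, hJξ, (Submodule.span_singleton_le_iff_mem _ _).mpr hJξH,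
    finrank_span_singleton fun h => hJξ (h ▸ zero_mem _),
    inf_comm (ℝ ∙ J ξ) _ ▸ disjoint_iff.mp (Submodule.disjoint_span_singleton_of_notMem hJξ)⟩
end

section
/- Let V be a finite-dimensional real vector space, J : V → V a linear map with J ∘ J = -id, and g a nondegenerate symmetric bilinear form with g(JX, JY) = -g(X, Y) for all X, Y. Suppose V = S ⊕ span{ξ} ⊕ span{N} is a direct sum decomposition with g(ξ, ξ) = g(N, N) = 0, g(ξ, N) = 1, and g(ξ, w) = g(N, w) = 0 for all w ∈ S. Then Jξ ∈ span{N} if and only if J(S) = S. (This is the pointwise content of Theorem 3.1: a lightlike hyperplane is radical transversal if and only if its screen is holomorphic with respect to J.) -/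
/-!
`J` is `g`-self-adjoint and has no real eigenvector. If `Jξ = aN`, then `a ≠ 0`, and
`g(N, Jw) = a⁻¹ g(Jξ, Jw) = -a⁻¹ g(ξ, w)` and `g(ξ, Jw) = a g(N, w)` vanish on the screen,
which is exactly the orthogonal complement of `ξ` and `N`; so `J(S) ⊆ S`, hence `J(S) = S`.
Conversely, if `J(S) = S` then `Jξ` is orthogonal to `S`, and nondegeneracy of `g` forces
`Jξ = αξ + βN`. Since `Jξ` is null, `αβ = 0`, and `β ≠ 0` because `ξ` is not an eigenvector.
-/

open Submodule

section ScreenDecomposition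

variable {V : Type*} [AddCommGroup V] [Module ℝ V]

section AlmostComplex

variable {J : V →ₗ[ℝ] V}

theorem eq_zero_of_map_eq_smul (hJ : ∀ x : V, J (J x) = -x) {x : V} {c : ℝ}
    (h : J x = c • x) : x = 0 := by
  have hx : (c * c + 1) • x = 0 := by
    rw [add_smul, one_smul, ← smul_smul, ← h, ← map_smul, ← h, hJ, neg_add_cancel]
  exact (smul_eq_zero.mp hx).resolve_left (by nlinarith [mul_self_nonneg c])

theorem map_eq_self_of_forall_mem (hJ : ∀ x : V, J (J x) = -x) {S : Submodule ℝ V}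
    (h : ∀ w ∈ S, J w ∈ S) : S.map J = S := by
  refine le_antisymm (map_le_iff_le_comap.mpr h) fun w hw ↦ ⟨-J w, S.neg_mem (h w hw), ?_⟩
  rw [map_neg, hJ, neg_neg]

theorem apply_map_eq_apply_map_of_norden (hJ : ∀ x : V, J (J x) = -x) {g : V →ₗ[ℝ] V →ₗ[ℝ] ℝ}
    (hNorden : ∀ x y : V, g (J x) (J y) = -(g x y)) (x y : V) : g (J x) y = g x (J y) := by
  have h := hNorden x (J y)
  rw [hJ, map_neg] at h
  exact neg_injective h

end AlmostComplex

structure IsScreenDecomposition (g : V →ₗ[ℝ] V →ₗ[ℝ] ℝ) (S : Submodule ℝ V) (ξ N : V) :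
    Prop where
  sup_eq_top : S ⊔ (span ℝ {ξ} ⊔ span ℝ {N}) = ⊤
  ξ_ξ : g ξ ξ = 0
  N_N : g N N = 0
  ξ_N : g ξ N = 1
  N_ξ : g N ξ = 1
  ξ_screen : ∀ w ∈ S, g ξ w = 0
  N_screen : ∀ w ∈ S, g N w = 0

namespace IsScreenDecomposition

variable {g : V →ₗ[ℝ] V →ₗ[ℝ] ℝ} {S : Submodule ℝ V} {ξ N : V}

theorem ξ_ne_zero (hF : IsScreenDecomposition g S ξ N) : ξ ≠ 0 := by
  rintro rfl
  simpa using hF.ξ_N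

theorem exists_eq_add (hF : IsScreenDecomposition g S ξ N) (v : V) :
    ∃ s ∈ S, v = s + g N v • ξ + g ξ v • N := by
  obtain ⟨s, hs, u, hu, rfl⟩ := mem_sup.mp (hF.sup_eq_top ▸ mem_top : v ∈ _)
  obtain ⟨p, hp, q, hq, rfl⟩ := mem_sup.mp hu
  obtain ⟨a, rfl⟩ := mem_span_singleton.mp hp
  obtain ⟨b, rfl⟩ := mem_span_singleton.mp hq
  refine ⟨s, hs, ?_⟩
  simp [hF.ξ_screen s hs, hF.N_screen s hs, hF.ξ_ξ, hF.N_N, hF.ξ_N, hF.N_ξ, add_assoc]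

theorem mem_iff (hF : IsScreenDecomposition g S ξ N) {v : V} :
    v ∈ S ↔ g N v = 0 ∧ g ξ v = 0 := by
  refine ⟨fun hv ↦ ⟨hF.N_screen v hv, hF.ξ_screen v hv⟩, fun ⟨hN, hξ⟩ ↦ ?_⟩
  obtain ⟨s, hs, hv⟩ := hF.exists_eq_add v
  rwa [hv, hN, hξ, zero_smul, zero_smul, add_zero, add_zero]

theorem eq_zero_of_mem_of_forall_apply_eq_zero (hF : IsScreenDecomposition g S ξ N)
    (hsymm : ∀ x y : V, g x y = g y x) (hnd : ∀ x : V, (∀ y : V, g x y = 0) → x = 0)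
    {s : V} (hs : s ∈ S) (horth : ∀ w ∈ S, g s w = 0) : s = 0 := by
  refine hnd s fun y ↦ ?_
  obtain ⟨t, ht, hy⟩ := hF.exists_eq_add y
  rw [hy]
  simp [horth t ht, hsymm s ξ, hsymm s N, hF.ξ_screen s hs, hF.N_screen s hs]

theorem eq_smul_add_smul_of_forall_apply_eq_zero (hF : IsScreenDecomposition g S ξ N)
    (hsymm : ∀ x y : V, g x y = g y x) (hnd : ∀ x : V, (∀ y : V, g x y = 0) → x = 0)
    {v : V} (horth : ∀ w ∈ S, g v w = 0) : v = g N v • ξ + g ξ v • N := by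
  obtain ⟨s, hs, hv⟩ := hF.exists_eq_add v
  have hs0 : s = 0 := by
    refine hF.eq_zero_of_mem_of_forall_apply_eq_zero hsymm hnd hs fun w hw ↦ ?_
    have h := horth w hw
    rw [hv] at h
    simpa [hF.ξ_screen w hw, hF.N_screen w hw] using h
  rwa [hs0, zero_add] at hv

variable {J : V →ₗ[ℝ] V}

theorem map_screen_eq_of_map_ξ_mem (hF : IsScreenDecomposition g S ξ N)
    (hJ : ∀ x : V, J (J x) = -x) (hNorden : ∀ x y : V, g (J x) (J y) = -(g x y))
    (h : J ξ ∈ span ℝ {N}) : S.map J = S := by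
  obtain ⟨a, ha⟩ := mem_span_singleton.mp h
  have ha0 : a ≠ 0 := by
    rintro rfl
    exact hF.ξ_ne_zero (eq_zero_of_map_eq_smul hJ (c := 0) (by rw [← ha, zero_smul, zero_smul]))
  have hN : N = a⁻¹ • J ξ := by rw [← ha, smul_smul, inv_mul_cancel₀ ha0, one_smul]
  refine map_eq_self_of_forall_mem hJ fun w hw ↦ hF.mem_iff.mpr ⟨?_, ?_⟩
  · rw [hN, map_smul, LinearMap.smul_apply, hNorden, hF.ξ_screen w hw, neg_zero, smul_zero]
  · rw [← apply_map_eq_apply_map_of_norden hJ hNorden, ← ha, map_smul, LinearMap.smul_apply,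
      hF.N_screen w hw, smul_zero]

theorem map_ξ_mem_of_map_screen_eq (hF : IsScreenDecomposition g S ξ N)
    (hJ : ∀ x : V, J (J x) = -x) (hsymm : ∀ x y : V, g x y = g y x)
    (hnd : ∀ x : V, (∀ y : V, g x y = 0) → x = 0)
    (hNorden : ∀ x y : V, g (J x) (J y) = -(g x y)) (h : S.map J = S) :
    J ξ ∈ span ℝ {N} := by
  have horth : ∀ w ∈ S, g (J ξ) w = 0 := fun w hw ↦ by
    rw [apply_map_eq_apply_map_of_norden hJ hNorden]
    exact hF.ξ_screen _ (h ▸ mem_map_of_mem hw)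
  obtain ⟨α, β, hdec⟩ : ∃ α β : ℝ, J ξ = α • ξ + β • N :=
    ⟨_, _, hF.eq_smul_add_smul_of_forall_apply_eq_zero hsymm hnd horth⟩
  have hαβ : α * β = 0 := by
    have hnull := hNorden ξ ξ
    rw [hF.ξ_ξ, neg_zero, hdec] at hnull
    simp only [map_add, map_smul, LinearMap.add_apply, LinearMap.smul_apply, smul_eq_mul,
      hF.ξ_ξ, hF.N_N, hF.ξ_N, hF.N_ξ] at hnull
    linarith
  have hβ : β ≠ 0 := by
    rintro rfl
    rw [zero_smul, add_zero] at hdec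
    exact hF.ξ_ne_zero (eq_zero_of_map_eq_smul hJ hdec)
  have hα : α = 0 := (mul_eq_zero.mp hαβ).resolve_right hβ
  rw [hdec, hα, zero_smul, zero_add]
  exact smul_mem _ _ (mem_span_singleton_self N)

end IsScreenDecomposition

end ScreenDecomposition

theorem statement4_general {V : Type*} [AddCommGroup V] [Module ℝ V]
    (J : V →ₗ[ℝ] V) (hJ : ∀ x : V, J (J x) = -x)
    (g : V →ₗ[ℝ] V →ₗ[ℝ] ℝ)
    (hsymm : ∀ x y : V, g x y = g y x)
    (hnd : ∀ x : V, (∀ y : V, g x y = 0) → x = 0)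
    (hNorden : ∀ x y : V, g (J x) (J y) = -(g x y))
    (S : Submodule ℝ V) (ξ N : V)
    (hsum : S ⊔ (span ℝ {ξ} ⊔ span ℝ {N}) = ⊤)
    (hξξ : g ξ ξ = 0) (hNN : g N N = 0) (hξN : g ξ N = 1)
    (horthξ : ∀ w ∈ S, g ξ w = 0) (horthN : ∀ w ∈ S, g N w = 0) :
    J ξ ∈ span ℝ {N} ↔ Submodule.map J S = S := by
  have hF : IsScreenDecomposition g S ξ N :=
    ⟨hsum, hξξ, hNN, hξN, (hsymm N ξ).trans hξN, horthξ, horthN⟩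
  exact ⟨hF.map_screen_eq_of_map_ξ_mem hJ hNorden,
    hF.map_ξ_mem_of_map_screen_eq hJ hsymm hnd hNorden⟩

/-- pointwise content of Theorem 3.1.  Let `V` carry an almost complex
structure `J` with nondegenerate Norden metric `g`, and let
`V = S ⊕ span{ξ} ⊕ span{N}` be a direct sum decomposition with
`g(ξ,ξ) = g(N,N) = 0`, `g(ξ,N) = 1` and `g(ξ,w) = g(N,w) = 0` for all `w ∈ S`.
Then `Jξ ∈ span{N}` if and only if `J(S) = S`: a lightlike hyperplane is radical
transversal iff its screen is holomorphic with respect to `J`. -/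
theorem statement4 {V : Type*} [AddCommGroup V] [Module ℝ V] [FiniteDimensional ℝ V]
    (J : V →ₗ[ℝ] V) (hJ : ∀ x : V, J (J x) = -x)
    (g : V →ₗ[ℝ] V →ₗ[ℝ] ℝ)
    (hsymm : ∀ x y : V, g x y = g y x)
    (hnd : ∀ x : V, (∀ y : V, g x y = 0) → x = 0)
    (hNorden : ∀ x y : V, g (J x) (J y) = -(g x y))
    (S : Submodule ℝ V) (ξ N : V)
    (hsum : S ⊔ (span ℝ {ξ} ⊔ span ℝ {N}) = ⊤)
    (hd1 : S ⊓ (span ℝ {ξ} ⊔ span ℝ {N}) = ⊥)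
    (hd2 : span ℝ {ξ} ⊓ (S ⊔ span ℝ {N}) = ⊥)
    (hd3 : span ℝ {N} ⊓ (S ⊔ span ℝ {ξ}) = ⊥)
    (hξξ : g ξ ξ = 0) (hNN : g N N = 0) (hξN : g ξ N = 1)
    (horthξ : ∀ w ∈ S, g ξ w = 0) (horthN : ∀ w ∈ S, g N w = 0) :
    J ξ ∈ span ℝ {N} ↔ Submodule.map J S = S :=
  statement4_general J hJ g hsymm hnd hNorden S ξ N hsum hξξ hNN hξN horthξ horthN
end

section
/- Let V be a finite-dimensional real vector space, J : V → V a linear map with J ∘ J = -id, and g a nondegenerate symmetric bilinear form with g(JX, JY) = -g(X, Y) for all X, Y. Let H ⊆ V be a hyperplane whose radical R = Rad_g H = H ∩ H^⊥ᵍ is one-dimensional and which is radical transversal, i.e. J(R) ∩ H = {0}. If S and S′ are two subspaces of H with J(S) = S, J(S′) = S′, H = R ⊕ S and H = R ⊕ S′, then S = S′. (This is the pointwise content of Theorem 4.1: a radical transversal lightlike hypersurface has a unique screen distribution.) -/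
/-! Split `s ∈ S` as `r + t` with `r` in the radical and `t ∈ S'`. Both screens being `J`-invariant
and contained in `H`, `J r = J s - J t` lies in `H`; radical transversality forces `J r = 0`, and
`J` is injective since `J² = -1`, so `r = 0` and `s ∈ S'`. By symmetry `S = S'`. -/

open Module Submodule

theorem Submodule.le_of_sup_eq_of_map_inf_eq_bot {K M : Type*} [Ring K] [AddCommGroup M]
    [Module K M] {J : M →ₗ[K] M} (hJ : Function.Injective J) {R H S S' : Submodule K M}
    (hRT : R.map J ⊓ H = ⊥) (hS : S ≤ H) (hS' : S' ≤ H)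
    (hJS : S.map J ≤ S) (hJS' : S'.map J ≤ S') (hsum : R ⊔ S' = H) :
    S ≤ S' := by
  intro s hs
  obtain ⟨r, hr, t, ht, rfl⟩ := mem_sup.mp (hsum ▸ hS hs)
  have hJrH : J r ∈ H := by
    have hJs : J (r + t) ∈ H := hS (hJS (mem_map_of_mem hs))
    have hJt : J t ∈ H := hS' (hJS' (mem_map_of_mem ht))
    simpa using H.sub_mem hJs hJt
  have hJr : J r = 0 := by
    simpa [hRT] using (show J r ∈ R.map J ⊓ H from ⟨mem_map_of_mem hr, hJrH⟩)
  rw [hJ (hJr.trans J.map_zero.symm), zero_add]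
  exact ht

theorem statement5_general {V : Type*} [AddCommGroup V] [Module ℝ V]
    (J : V →ₗ[ℝ] V) (hJ : ∀ x : V, J (J x) = -x)
    (g : V →ₗ[ℝ] V →ₗ[ℝ] ℝ)
    (H : Submodule ℝ V)
    (hRT : Submodule.map J (H ⊓ orthComp g H) ⊓ H = ⊥)
    (S S' : Submodule ℝ V)
    (hS : S ≤ H) (hS' : S' ≤ H)
    (hJS : Submodule.map J S = S) (hJS' : Submodule.map J S' = S')
    (hsum : (H ⊓ orthComp g H) ⊔ S = H)
    (hsum' : (H ⊓ orthComp g H) ⊔ S' = H) :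
    S = S' := by
  have hJinj : Function.Injective J := fun x y hxy =>
    neg_injective (by rw [← hJ x, ← hJ y, hxy])
  exact le_antisymm
    (le_of_sup_eq_of_map_inf_eq_bot hJinj hRT hS hS' hJS.le hJS'.le hsum')
    (le_of_sup_eq_of_map_inf_eq_bot hJinj hRT hS' hS hJS'.le hJS.le hsum)

/-- pointwise content of Theorem 4.1.  Let `V` carry an almost complex
structure `J` with nondegenerate Norden metric `g`, and let `H` be a hyperplane whose
radical `R = H ⊓ H^⊥ᵍ` is one-dimensional, with `J(R) ∩ H = {0}` (radical transversal).
If `S, S'` are holomorphic screens of `H` (i.e. `J`-invariant complements of `R`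
inside `H`), then `S = S'`: the screen distribution is unique. -/
theorem statement5 {V : Type*} [AddCommGroup V] [Module ℝ V] [FiniteDimensional ℝ V]
    (J : V →ₗ[ℝ] V) (hJ : ∀ x : V, J (J x) = -x)
    (g : V →ₗ[ℝ] V →ₗ[ℝ] ℝ)
    (hsymm : ∀ x y : V, g x y = g y x)
    (hnd : ∀ x : V, (∀ y : V, g x y = 0) → x = 0)
    (hNorden : ∀ x y : V, g (J x) (J y) = -(g x y))
    (H : Submodule ℝ V) (hH : finrank ℝ V = finrank ℝ H + 1)
    (hR : finrank ℝ (H ⊓ orthComp g H : Submodule ℝ V) = 1)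
    (hRT : Submodule.map J (H ⊓ orthComp g H) ⊓ H = ⊥)
    (S S' : Submodule ℝ V)
    (hS : S ≤ H) (hS' : S' ≤ H)
    (hJS : Submodule.map J S = S) (hJS' : Submodule.map J S' = S')
    (hsum : (H ⊓ orthComp g H) ⊔ S = H) (hdisj : (H ⊓ orthComp g H) ⊓ S = ⊥)
    (hsum' : (H ⊓ orthComp g H) ⊔ S' = H) (hdisj' : (H ⊓ orthComp g H) ⊓ S' = ⊥) :
    S = S' :=
  statement5_general J hJ g H hRT S S' hS hS' hJS hJS' hsum hsum'
end

section
/- Let V be a finite-dimensional real vector space, J : V → V a linear map with J ∘ J = -id, and g a nondegenerate symmetric bilinear form with g(JX, JY) = -g(X, Y) for all X, Y. Let A : V → V be a linear map satisfying g(J(AX), Y) = g(X, J(AY)) for all X, Y ∈ V. Then A is self-adjoint with respect to g (i.e. g(AX, Y) = g(X, AY) for all X, Y) if and only if A ∘ J = J ∘ A. (This is the pointwise content of the theorem: the shape operator A_N of a radical transversal lightlike hypersurface of a Kaehler manifold with Norden metric is self-conjugate with respect to g if and only if A_N commutes with J.) -/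
/-! With `J² = -1`, the Norden condition says exactly that `J` is `g`-self-adjoint, and the
hypothesis on `A` says that `J ∘ A` is. If `A` is self-adjoint, then `A ∘ J` and `J ∘ A` are both
left adjoint to `J ∘ A`, so they agree by nondegeneracy. Conversely, if `A` commutes with `J`,
then `-A = J ∘ (J ∘ A)` has adjoint `(J ∘ A) ∘ J = J ∘ J ∘ A = -A`. -/

namespace LinearMap

variable {R V M : Type*} [CommRing R] [AddCommGroup V] [Module R V] [AddCommGroup M] [Module R M]
  {g : V →ₗ[R] V →ₗ[R] M} {J A : V → V}

theorem isSelfAdjoint_of_norden (hJ : ∀ x, J (J x) = -x)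
    (hNorden : ∀ x y, g (J x) (J y) = -g x y) : g.IsSelfAdjoint J := fun x y => by
  simpa [hJ] using hNorden x (J y)

theorem IsAdjointPair.eq_of_separatingLeft (hg : g.SeparatingLeft) {f₁ f₂ h : V → V}
    (h₁ : IsAdjointPair g g f₁ h) (h₂ : IsAdjointPair g g f₂ h) : f₁ = f₂ := by
  funext x
  refine sub_eq_zero.mp (hg _ fun y => ?_)
  rw [map_sub, sub_apply, h₁, h₂, sub_self]

theorem comm_of_isSelfAdjoint (hg : g.SeparatingLeft) (hJ : g.IsSelfAdjoint J)
    (hJA : g.IsSelfAdjoint (J ∘ A)) (hA : g.IsSelfAdjoint A) (x : V) : A (J x) = J (A x) :=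
  congrFun ((hJ.comp hA).eq_of_separatingLeft hg hJA) x

theorem isSelfAdjoint_of_comm (hJJ : ∀ x, J (J x) = -x) (hJ : g.IsSelfAdjoint J)
    (hJA : g.IsSelfAdjoint (J ∘ A)) (hcomm : ∀ x, A (J x) = J (A x)) : g.IsSelfAdjoint A := by
  have hJJA : IsAdjointPair g g (J ∘ J ∘ A) (J ∘ J ∘ A) := by
    simpa only [Function.comp_def, hcomm] using hJA.comp hJ
  intro x y
  simpa only [Function.comp_apply, hJJ, map_neg, neg_apply, neg_inj] using hJJA x y

end LinearMap

theorem statement6_general {V : Type*} [AddCommGroup V] [Module ℝ V]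
    (J : V →ₗ[ℝ] V) (hJ : ∀ x : V, J (J x) = -x)
    (g : V →ₗ[ℝ] V →ₗ[ℝ] ℝ)
    (hnd : ∀ x : V, (∀ y : V, g x y = 0) → x = 0)
    (hNorden : ∀ x y : V, g (J x) (J y) = -(g x y))
    (A : V →ₗ[ℝ] V)
    (hA : ∀ x y : V, g (J (A x)) y = g x (J (A y))) :
    (∀ x y : V, g (A x) y = g x (A y)) ↔ (∀ x : V, A (J x) = J (A x)) := by
  have hJsa : g.IsSelfAdjoint J := LinearMap.isSelfAdjoint_of_norden hJ hNorden
  exact ⟨LinearMap.comm_of_isSelfAdjoint hnd hJsa hA,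
    LinearMap.isSelfAdjoint_of_comm hJ hJsa hA⟩

/-- pointwise content of Theorem 4.1 on the shape operator.
Let `V` carry an almost complex structure `J` with nondegenerate Norden metric `g`,
and let `A : V → V` be a linear map with `g(J(AX), Y) = g(X, J(AY))` for all `X, Y`.
Then `A` is self-adjoint with respect to `g` iff `A ∘ J = J ∘ A`. -/
theorem statement6 {V : Type*} [AddCommGroup V] [Module ℝ V] [FiniteDimensional ℝ V]
    (J : V →ₗ[ℝ] V) (hJ : ∀ x : V, J (J x) = -x)
    (g : V →ₗ[ℝ] V →ₗ[ℝ] ℝ)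
    (hsymm : ∀ x y : V, g x y = g y x)
    (hnd : ∀ x : V, (∀ y : V, g x y = 0) → x = 0)
    (hNorden : ∀ x y : V, g (J x) (J y) = -(g x y))
    (A : V →ₗ[ℝ] V)
    (hA : ∀ x y : V, g (J (A x)) y = g x (J (A y))) :
    (∀ x y : V, g (A x) y = g x (A y)) ↔ (∀ x : V, A (J x) = J (A x)) :=
  statement6_general J hJ g hnd hNorden A hA
end

section
/- Let V be a finite-dimensional real vector space, J : V → V a linear map with J ∘ J = -id, g a nondegenerate symmetric bilinear form with g(JX, JY) = -g(X, Y) for all X, Y, and g̃(X, Y) = g(JX, Y) the associated metric. For a hyperplane H ⊆ V the following are equivalent: (i) the restriction of g to H is nondegenerate and g(v, Jv) = 0 for every v in the g-orthogonal complement H^⊥ᵍ; (ii) H is lightlike with respect to g̃ (i.e. Rad_g̃ H = H ∩ H^⊥ᵍ̃ ≠ {0}) and radical transversal with respect to g̃ (i.e. J(Rad_g̃ H) ∩ H = {0}). Moreover, in this case Rad_g̃ H = J(H^⊥ᵍ). (This is the pointwise content of Theorem 5.1.) -/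
/-! Since `g` is nondegenerate, `H^⊥ᵍ` is a line `ℝ ξ` and `H = ker g(ξ, ·)`; since `J⁻¹ = -J`,
`H^⊥g̃ = J⁻¹(H^⊥ᵍ) = ℝ Jξ`. Both (i) and (ii) then say `ξ ∉ H ∧ Jξ ∈ H`: in (i), `g|_H` is
degenerate exactly when `ξ ∈ H`, and `g(ξ, Jξ) = 0` exactly when `Jξ ∈ H`; in (ii), the line
`Rad_g̃ H = H ∩ ℝ Jξ` is nonzero iff `Jξ ∈ H`, and then `J(Rad_g̃ H) = ℝ ξ`. -/

open Module

open Submodule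

theorem Submodule.comap_eq_map_of_apply_apply_eq_neg {R M : Type*} [Ring R] [AddCommGroup M]
    [Module R M] {J : M →ₗ[R] M} (hJ : ∀ x, J (J x) = -x) (L : Submodule R M) :
    L.comap J = L.map J := by
  ext v
  refine ⟨fun hv => ⟨-J v, L.neg_mem hv, by rw [map_neg, hJ, neg_neg]⟩, ?_⟩
  rintro ⟨u, hu, rfl⟩
  simpa [mem_comap, hJ] using L.neg_mem hu

theorem Submodule.isCoatom_of_finrank_eq_add_one {K V : Type*} [DivisionRing K] [AddCommGroup V]
    [Module K V] [FiniteDimensional K V] {H : Submodule K V}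
    (hH : finrank K V = finrank K H + 1) : IsCoatom H := by
  refine ⟨fun h => by rw [h, finrank_top] at hH; omega, fun W hW => eq_top_of_finrank_eq ?_⟩
  have := finrank_lt_finrank_of_lt hW
  have := finrank_le W
  omega

theorem LinearMap.forall_mem_span_singleton_apply_self_eq_zero_iff {R M : Type*} [CommSemiring R]
    [AddCommMonoid M] [Module R M] (b : M →ₗ[R] M →ₗ[R] R) (J : M →ₗ[R] M) (ξ : M) :
    (∀ v ∈ R ∙ ξ, b v (J v) = 0) ↔ b ξ (J ξ) = 0 := by
  refine ⟨fun h => h ξ (mem_span_singleton_self ξ), fun h v hv => ?_⟩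
  obtain ⟨c, rfl⟩ := mem_span_singleton.mp hv
  simp [h]

section OrthComp

variable {V : Type*} [AddCommGroup V] [Module ℝ V]

theorem mem_orthComp {b : V →ₗ[ℝ] V →ₗ[ℝ] ℝ} {W : Submodule ℝ V} {v : V} :
    v ∈ orthComp b W ↔ ∀ w ∈ W, b v w = 0 := Iff.rfl

theorem orthComp_eq_comap_dualAnnihilator (b : V →ₗ[ℝ] V →ₗ[ℝ] ℝ) (W : Submodule ℝ V) :
    orthComp b W = W.dualAnnihilator.comap b := by
  ext v
  simp [mem_orthComp, mem_dualAnnihilator]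

theorem orthComp_comp (b : V →ₗ[ℝ] V →ₗ[ℝ] ℝ) (J : V →ₗ[ℝ] V) (W : Submodule ℝ V) :
    orthComp (b ∘ₗ J) W = (orthComp b W).comap J := rfl

theorem disjoint_orthComp_iff (b : V →ₗ[ℝ] V →ₗ[ℝ] ℝ) (W : Submodule ℝ V) :
    Disjoint W (orthComp b W) ↔ ∀ x ∈ W, (∀ y ∈ W, b x y = 0) → x = 0 :=
  disjoint_def

variable [FiniteDimensional ℝ V] {b : V →ₗ[ℝ] V →ₗ[ℝ] ℝ}

theorem finrank_orthComp_add_finrank (hb : ∀ x, (∀ y, b x y = 0) → x = 0) (W : Submodule ℝ V) :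
    finrank ℝ (orthComp b W) + finrank ℝ W = finrank ℝ V := by
  have hinj : Function.Injective b := by
    rw [← LinearMap.ker_eq_bot, LinearMap.ker_eq_bot']
    exact fun x hx => hb x fun y => by rw [hx]; rfl
  have hsurj := (LinearMap.injective_iff_surjective_of_finrank_eq_finrank
    Subspace.dual_finrank_eq.symm).mp hinj
  let e := LinearEquiv.ofBijective b ⟨hinj, hsurj⟩
  rw [orthComp_eq_comap_dualAnnihilator, show (b : V →ₗ[ℝ] Module.Dual ℝ V) = e from rfl,
    comap_equiv_eq_map_symm, LinearEquiv.finrank_map_eq, add_comm,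
    Subspace.finrank_add_finrank_dualAnnihilator_eq]

variable {H : Submodule ℝ V}

theorem exists_ne_zero_orthComp_eq_span_singleton (hb : ∀ x, (∀ y, b x y = 0) → x = 0)
    (hH : finrank ℝ V = finrank ℝ H + 1) : ∃ ξ ≠ 0, orthComp b H = ℝ ∙ ξ := by
  refine (atom_iff_nonzero_span _).mp (isAtom_iff_finrank_eq_one.mpr ?_)
  have := finrank_orthComp_add_finrank hb H
  omega

theorem ker_eq_of_mem_orthComp (hb : ∀ x, (∀ y, b x y = 0) → x = 0)
    (hH : finrank ℝ V = finrank ℝ H + 1) {ξ : V} (hξ : ξ ∈ orthComp b H) (hξ0 : ξ ≠ 0) :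
    LinearMap.ker (b ξ) = H := by
  refine ((isCoatom_of_finrank_eq_add_one hH).le_iff.mp fun w hw => hξ w hw).resolve_left ?_
  exact fun htop => hξ0 (hb ξ fun y => LinearMap.ker_eq_top.mp htop ▸ rfl)

end OrthComp

theorem statement9_general {V : Type*} [AddCommGroup V] [Module ℝ V] [FiniteDimensional ℝ V]
    (J : V →ₗ[ℝ] V) (hJ : ∀ x : V, J (J x) = -x)
    (g : V →ₗ[ℝ] V →ₗ[ℝ] ℝ)
    (hnd : ∀ x : V, (∀ y : V, g x y = 0) → x = 0)
    (H : Submodule ℝ V) (hH : finrank ℝ V = finrank ℝ H + 1) :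
    (((∀ x ∈ H, (∀ y ∈ H, g x y = 0) → x = 0) ∧
        (∀ v ∈ orthComp g H, g v (J v) = 0)) ↔
      (H ⊓ orthComp (g ∘ₗ J) H ≠ ⊥ ∧
        Submodule.map J (H ⊓ orthComp (g ∘ₗ J) H) ⊓ H = ⊥)) ∧
    (((∀ x ∈ H, (∀ y ∈ H, g x y = 0) → x = 0) ∧
        (∀ v ∈ orthComp g H, g v (J v) = 0)) →
      H ⊓ orthComp (g ∘ₗ J) H = Submodule.map J (orthComp g H)) := by
  obtain ⟨ξ, hξ0, hL⟩ := exists_ne_zero_orthComp_eq_span_singleton hnd hH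
  have hJξ0 : J ξ ≠ 0 := fun h => hξ0 (by simpa [h] using (hJ ξ).symm)
  have hJL : (orthComp g H).map J = ℝ ∙ J ξ := by rw [hL, map_span, Set.image_singleton]
  have hperp : orthComp (g ∘ₗ J) H = ℝ ∙ J ξ := by
    rw [orthComp_comp, comap_eq_map_of_apply_apply_eq_neg hJ, hJL]
  have hi : ((∀ x ∈ H, (∀ y ∈ H, g x y = 0) → x = 0) ∧ ∀ v ∈ orthComp g H, g v (J v) = 0) ↔
      ξ ∉ H ∧ J ξ ∈ H := by
    rw [← disjoint_orthComp_iff, hL, disjoint_span_singleton' hξ0,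
      LinearMap.forall_mem_span_singleton_apply_self_eq_zero_iff, ← LinearMap.mem_ker,
      ker_eq_of_mem_orthComp hnd hH (hL ▸ mem_span_singleton_self ξ) hξ0]
  have hlightlike : H ⊓ orthComp (g ∘ₗ J) H ≠ ⊥ ↔ J ξ ∈ H := by
    rw [hperp, Ne, ← disjoint_iff, disjoint_span_singleton' hJξ0, not_not]
  have hrad (hJξ : J ξ ∈ H) : H ⊓ orthComp (g ∘ₗ J) H = ℝ ∙ J ξ := by
    rwa [hperp, inf_eq_right, span_singleton_le_iff_mem]
  have htransversal (hJξ : J ξ ∈ H) :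
      map J (H ⊓ orthComp (g ∘ₗ J) H) ⊓ H = ⊥ ↔ ξ ∉ H := by
    rw [hrad hJξ, map_span, Set.image_singleton, hJ, ← Set.neg_singleton, span_neg,
      ← disjoint_iff, disjoint_comm, disjoint_span_singleton' hξ0]
  rw [hi, hlightlike, hJL]
  exact ⟨⟨fun ⟨hξ, hJξ⟩ => ⟨hJξ, (htransversal hJξ).mpr hξ⟩,
      fun ⟨hJξ, ht⟩ => ⟨(htransversal hJξ).mp ht, hJξ⟩⟩,
    fun ⟨_, hJξ⟩ => hrad hJξ⟩

/-- pointwise content of Theorem 5.1.  Let `V` carry an almost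
complex structure `J` with nondegenerate Norden metric `g` and associated metric
`g̃ = g(J·, ·)` (here `g ∘ₗ J`).  For a hyperplane `H` the following are equivalent:
(i) `g` restricted to `H` is nondegenerate and `g(v, Jv) = 0` for every `v ∈ H^⊥ᵍ`;
(ii) `H` is lightlike with respect to `g̃` and radical transversal with respect to `g̃`.
Moreover in this case `Rad_g̃ H = J(H^⊥ᵍ)`. -/
theorem statement9 {V : Type*} [AddCommGroup V] [Module ℝ V] [FiniteDimensional ℝ V]
    (J : V →ₗ[ℝ] V) (hJ : ∀ x : V, J (J x) = -x)
    (g : V →ₗ[ℝ] V →ₗ[ℝ] ℝ)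
    (hsymm : ∀ x y : V, g x y = g y x)
    (hnd : ∀ x : V, (∀ y : V, g x y = 0) → x = 0)
    (hNorden : ∀ x y : V, g (J x) (J y) = -(g x y))
    (H : Submodule ℝ V) (hH : finrank ℝ V = finrank ℝ H + 1) :
    (((∀ x ∈ H, (∀ y ∈ H, g x y = 0) → x = 0) ∧
        (∀ v ∈ orthComp g H, g v (J v) = 0)) ↔
      (H ⊓ orthComp (g ∘ₗ J) H ≠ ⊥ ∧
        Submodule.map J (H ⊓ orthComp (g ∘ₗ J) H) ⊓ H = ⊥)) ∧
    (((∀ x ∈ H, (∀ y ∈ H, g x y = 0) → x = 0) ∧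
        (∀ v ∈ orthComp g H, g v (J v) = 0)) →
      H ⊓ orthComp (g ∘ₗ J) H = Submodule.map J (orthComp g H)) :=
  statement9_general J hJ g hnd H hH
end

section
/- Let V be a finite-dimensional real vector space, J : V → V a linear map with J ∘ J = -id, g a nondegenerate symmetric bilinear form with g(JX, JY) = -g(X, Y) for all X, Y, and g̃(X, Y) = g(JX, Y). Let H ⊆ V be a hyperplane that is lightlike with respect to g̃ with one-dimensional radical spanned by ξ, let S ⊆ H satisfy H = span{ξ} ⊕ S and J(S) = S, and suppose Jξ = bN for some b ≠ 0 with N ∉ H. Then g(w, ξ) = g(w, N) = 0 for every w ∈ S and g(ξ, N) = 0; hence S, span{ξ} and span{N} are mutually orthogonal with respect to g and V = S ⊕ span{ξ} ⊕ span{N} is a g-orthogonal decomposition. -/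
open Module Submodule

theorem Submodule.sup_span_singleton_eq_top_of_finrank_eq_add_one {K V : Type*} [Field K]
    [AddCommGroup V] [Module K V] [FiniteDimensional K V] {H : Submodule K V}
    (hH : finrank K V = finrank K H + 1) {v : V} (hv : v ∉ H) : H ⊔ span K {v} = ⊤ := by
  rw [sup_span_singleton_eq_top_iff hv]
  have := H.finrank_quotient_add_finrank
  omega

section Norden

variable {V : Type*} [AddCommGroup V] [Module ℝ V] {J : V →ₗ[ℝ] V} {g : V →ₗ[ℝ] V →ₗ[ℝ] ℝ}
  {W : Submodule ℝ V} {x y : V}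

theorem apply_eq_zero_of_mem_orthComp_comp (hNorden : ∀ x y : V, g (J x) (J y) = -(g x y))
    (hx : x ∈ orthComp (g ∘ₗ J) W) (hy : J y ∈ W) : g x y = 0 := by
  have : g (J x) (J y) = 0 := hx (J y) hy
  rwa [hNorden, neg_eq_zero] at this

theorem apply_eq_zero_of_mem_orthComp_comp_of_eq_smul {N : V} {b : ℝ} (hb : b ≠ 0)
    (hJx : J x = b • N) (hx : x ∈ orthComp (g ∘ₗ J) W) (hy : y ∈ W) : g N y = 0 := by
  have : g (J x) y = 0 := hx y hy
  simpa [hJx, hb] using this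

end Norden

theorem statement10_general {V : Type*} [AddCommGroup V] [Module ℝ V] [FiniteDimensional ℝ V]
    (J : V →ₗ[ℝ] V)
    (g : V →ₗ[ℝ] V →ₗ[ℝ] ℝ)
    (hsymm : ∀ x y : V, g x y = g y x)
    (hNorden : ∀ x y : V, g (J x) (J y) = -(g x y))
    (H : Submodule ℝ V) (hH : finrank ℝ V = finrank ℝ H + 1)
    (ξ : V)
    (hrad : H ⊓ orthComp (g ∘ₗ J) H = span ℝ {ξ})
    (S : Submodule ℝ V) (hS : S ≤ H)
    (hsum : span ℝ {ξ} ⊔ S = H) (hdisj : span ℝ {ξ} ⊓ S = ⊥)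
    (hJS : Submodule.map J S = S)
    (N : V) (b : ℝ) (hb : b ≠ 0) (hJξ : J ξ = b • N) (hN : N ∉ H) :
    (∀ w ∈ S, g w ξ = 0 ∧ g w N = 0) ∧
    g ξ N = 0 ∧
    S ⊔ (span ℝ {ξ} ⊔ span ℝ {N}) = ⊤ ∧
    S ⊓ (span ℝ {ξ} ⊔ span ℝ {N}) = ⊥ ∧
    span ℝ {ξ} ⊓ (S ⊔ span ℝ {N}) = ⊥ ∧
    span ℝ {N} ⊓ (S ⊔ span ℝ {ξ}) = ⊥ := by
  obtain ⟨hξH, hξrad⟩ : ξ ∈ H ⊓ orthComp (g ∘ₗ J) H := hrad ▸ mem_span_singleton_self ξ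
  have hξS : Disjoint S (span ℝ {ξ}) := (disjoint_iff.mpr hdisj).symm
  have hHN : Disjoint (S ⊔ span ℝ {ξ}) (span ℝ {N}) := by
    rw [sup_comm, hsum]
    exact disjoint_span_singleton_of_notMem hN
  refine ⟨fun w hw ↦ ⟨?_, ?_⟩, ?_, ?_, ?_, ?_, ?_⟩
  · rw [hsymm]
    exact apply_eq_zero_of_mem_orthComp_comp hNorden hξrad (hS (hJS.le (mem_map_of_mem hw)))
  · rw [hsymm]
    exact apply_eq_zero_of_mem_orthComp_comp_of_eq_smul hb hJξ hξrad (hS hw)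
  · rw [hsymm]
    exact apply_eq_zero_of_mem_orthComp_comp_of_eq_smul hb hJξ hξrad hξH
  · rw [sup_left_comm, ← sup_assoc, hsum]
    exact sup_span_singleton_eq_top_of_finrank_eq_add_one hH hN
  · exact (hξS.disjoint_sup_right_of_disjoint_sup_left hHN).eq_bot
  · rw [sup_comm] at hHN
    exact (hξS.symm.disjoint_sup_right_of_disjoint_sup_left hHN).eq_bot
  · exact hHN.symm.eq_bot

/-- Let `V` carry an almost complex structure `J` with nondegenerate
Norden metric `g` and associated metric `g̃ = g(J·, ·)` (here `g ∘ₗ J`).  Let `H` be a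
hyperplane, lightlike with respect to `g̃` with radical `span{ξ}` (`ξ ≠ 0`), let
`S ⊆ H` be a holomorphic screen (`H = span{ξ} ⊕ S`, `J(S) = S`), and suppose
`Jξ = b • N` with `b ≠ 0` and `N ∉ H`.  Then `g(w,ξ) = g(w,N) = 0` for every `w ∈ S`
and `g(ξ,N) = 0`; hence `S`, `span{ξ}`, `span{N}` are mutually `g`-orthogonal and
`V = S ⊕ span{ξ} ⊕ span{N}` is a `g`-orthogonal direct sum decomposition. -/
theorem statement10 {V : Type*} [AddCommGroup V] [Module ℝ V] [FiniteDimensional ℝ V]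
    (J : V →ₗ[ℝ] V) (hJ : ∀ x : V, J (J x) = -x)
    (g : V →ₗ[ℝ] V →ₗ[ℝ] ℝ)
    (hsymm : ∀ x y : V, g x y = g y x)
    (hnd : ∀ x : V, (∀ y : V, g x y = 0) → x = 0)
    (hNorden : ∀ x y : V, g (J x) (J y) = -(g x y))
    (H : Submodule ℝ V) (hH : finrank ℝ V = finrank ℝ H + 1)
    (ξ : V) (hξ : ξ ≠ 0)
    (hrad : H ⊓ orthComp (g ∘ₗ J) H = span ℝ {ξ})
    (S : Submodule ℝ V) (hS : S ≤ H)
    (hsum : span ℝ {ξ} ⊔ S = H) (hdisj : span ℝ {ξ} ⊓ S = ⊥)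
    (hJS : Submodule.map J S = S)
    (N : V) (b : ℝ) (hb : b ≠ 0) (hJξ : J ξ = b • N) (hN : N ∉ H) :
    (∀ w ∈ S, g w ξ = 0 ∧ g w N = 0) ∧
    g ξ N = 0 ∧
    S ⊔ (span ℝ {ξ} ⊔ span ℝ {N}) = ⊤ ∧
    S ⊓ (span ℝ {ξ} ⊔ span ℝ {N}) = ⊥ ∧
    span ℝ {ξ} ⊓ (S ⊔ span ℝ {N}) = ⊥ ∧
    span ℝ {N} ⊓ (S ⊔ span ℝ {ξ}) = ⊥ :=
  statement10_general J g hsymm hNorden H hH ξ hrad S hS hsum hdisj hJS N b hb hJξ hN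
end

section
/- Let V be a real vector space of dimension 2n + 1 with an almost contact structure with B-metric (φ, ξ₀, η, g), i.e. φ²X = -X + η(X)ξ₀, η(ξ₀) = 1, g(φX, φY) = -g(X, Y) + η(X)η(Y) for all X, Y, and assume g is nondegenerate. Then g has signature (n + 1, n): there is a g-orthogonal direct sum decomposition V = P ⊕ Q with dim P = n + 1, dim Q = n, g positive definite on P and negative definite on Q. -/
/-!
Diagonalising `g` in an orthogonal basis splits `V` into a `g`-orthogonal sum `P ⊕ Q` with `g`
positive definite on `P` and negative definite on `Q`; only the dimensions need an argument.
On `ker η` the map `φ` is injective and `g (φ x) (φ y) = -g x y`, so for a positive definite `A`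
the subspace `φ (A ⊓ ker η)` is negative definite, of dimension at least `dim A - 1`, and
disjoint from `A`: hence `2 dim A ≤ dim V + 1`. Dually, for a negative definite `B` the subspace
`span {ξ} ⊔ φ (B ⊓ ker η)` is positive definite (as `g ξ ξ = 1` and `g ξ (φ x) = 0`), so
`2 dim B ≤ dim V`. With `dim V = 2n + 1` this forces `dim P = n + 1` and `dim Q = n`.
-/

open Module
open LinearMap (ker range mem_ker)

section

variable {K V : Type*} [Field K] [AddCommGroup V] [Module K V]

theorem Submodule.finrank_le_finrank_inf_ker_add_one [FiniteDimensional K V]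
    (f : V →ₗ[K] K) (W : Submodule K V) :
    finrank K W ≤ finrank K ↥(W ⊓ ker f) + 1 := by
  have h₁ := Submodule.finrank_sup_add_finrank_inf_eq W (ker f)
  have h₂ := Submodule.finrank_le (W ⊔ ker f)
  have h₃ := LinearMap.finrank_range_add_finrank_ker f
  have h₄ : finrank K (range f) ≤ 1 := (Submodule.finrank_le _).trans_eq (finrank_self K)
  omega

theorem Submodule.finrank_map_eq_of_disjoint_ker {W : Submodule K V} {f : V →ₗ[K] V}
    (h : Disjoint W (ker f)) : finrank K (W.map f) = finrank K W := by
  rw [← LinearMap.range_domRestrict]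
  exact LinearMap.finrank_range_of_inj (LinearMap.injective_domRestrict_iff.mpr h)

theorem LinearMap.IsOrthoᵢ.apply_eq_sum {ι : Type*} [Fintype ι] {g : V →ₗ[K] V →ₗ[K] K}
    {v : Basis ι K V} (hv : g.IsOrthoᵢ v) (x y : V) :
    g x y = ∑ i, v.repr x i * v.repr y i * g (v i) (v i) := by
  conv_lhs => rw [← v.sum_repr x, ← v.sum_repr y]
  simp only [map_sum, map_smul, LinearMap.sum_apply, LinearMap.smul_apply, smul_eq_mul]
  refine Finset.sum_congr rfl fun i _ => ?_
  rw [Finset.sum_eq_single i (fun j _ hji => by rw [hv hji, mul_zero])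
    (fun hi => absurd (Finset.mem_univ i) hi)]
  ring

theorem LinearMap.IsOrthoᵢ.apply_eq_zero_of_mem_span_image_compl {ι : Type*} [Fintype ι]
    {g : V →ₗ[K] V →ₗ[K] K} {v : Basis ι K V} (hv : g.IsOrthoᵢ v) {s : Set ι} {p q : V}
    (hp : p ∈ Submodule.span K (v '' s))
    (hq : q ∈ Submodule.span K (v '' sᶜ)) : g p q = 0 := by
  rw [hv.apply_eq_sum]
  refine Finset.sum_eq_zero fun i _ => ?_
  by_cases hi : i ∈ s
  · rw [Finsupp.notMem_support_iff.1 fun h => v.mem_span_image.1 hq h hi, mul_zero, zero_mul]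
  · rw [Finsupp.notMem_support_iff.1 fun h => hi (v.mem_span_image.1 hp h), zero_mul, zero_mul]

section LinearOrder

variable [LinearOrder K]

def PosDefOn (g : V →ₗ[K] V →ₗ[K] K) (A : Submodule K V) : Prop :=
  ∀ x ∈ A, x ≠ 0 → 0 < g x x

def NegDefOn (g : V →ₗ[K] V →ₗ[K] K) (B : Submodule K V) : Prop :=
  ∀ x ∈ B, x ≠ 0 → g x x < 0

variable {g : V →ₗ[K] V →ₗ[K] K} {A B : Submodule K V}

theorem PosDefOn.disjoint (hA : PosDefOn g A) (hB : NegDefOn g B) : Disjoint A B := by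
  rw [Submodule.disjoint_def]
  intro x hxA hxB
  by_contra hx
  exact (hA x hxA hx).not_gt (hB x hxB hx)

theorem PosDefOn.finrank_add_finrank_le [FiniteDimensional K V] (hA : PosDefOn g A)
    (hB : NegDefOn g B) : finrank K A + finrank K B ≤ finrank K V :=
  Submodule.finrank_add_finrank_le_of_disjoint (hA.disjoint hB)

end LinearOrder

section OrderedField

variable [LinearOrder K] [IsStrictOrderedRing K] {g : V →ₗ[K] V →ₗ[K] K} {B : Submodule K V}

theorem posDefOn_neg_iff : PosDefOn (-g) B ↔ NegDefOn g B := by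
  simp only [PosDefOn, NegDefOn, LinearMap.neg_apply, neg_pos]

theorem LinearMap.IsOrthoᵢ.posDefOn_span_image {ι : Type*} [Fintype ι] {v : Basis ι K V}
    (hv : g.IsOrthoᵢ v) {s : Set ι}
    (hs : ∀ i ∈ s, 0 < g (v i) (v i)) : PosDefOn g (Submodule.span K (v '' s)) := by
  intro x hx hx0
  have hsupp : ∀ i, v.repr x i ≠ 0 → i ∈ s := fun i hi =>
    v.mem_span_image.1 hx (Finsupp.mem_support_iff.2 hi)
  obtain ⟨i, hi⟩ : ∃ i, v.repr x i ≠ 0 := by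
    by_contra! h
    exact hx0 (v.repr.map_eq_zero_iff.1 (Finsupp.ext h))
  rw [hv.apply_eq_sum]
  refine Finset.sum_pos' (fun j _ => ?_)
    ⟨i, Finset.mem_univ i, mul_pos (mul_self_pos.2 hi) (hs i (hsupp i hi))⟩
  by_cases hj : v.repr x j = 0
  · simp [hj]
  · exact mul_nonneg (mul_self_nonneg _) (hs j (hsupp j hj)).le

theorem LinearMap.IsOrthoᵢ.negDefOn_span_image {ι : Type*} [Fintype ι] {v : Basis ι K V}
    (hv : g.IsOrthoᵢ v) {s : Set ι}
    (hs : ∀ i ∈ s, g (v i) (v i) < 0) : NegDefOn g (Submodule.span K (v '' s)) := by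
  have hv' : (-g).IsOrthoᵢ v := fun _ _ hij => neg_eq_zero.2 (hv hij)
  exact posDefOn_neg_iff.1 (hv'.posDefOn_span_image fun i hi => by simpa using hs i hi)

theorem LinearMap.IsSymm.exists_isCompl_posDefOn_negDefOn [FiniteDimensional K V]
    (hsymm : g.IsSymm) (hnd : g.SeparatingLeft) :
    ∃ P Q : Submodule K V, IsCompl P Q ∧ PosDefOn g P ∧ NegDefOn g Q ∧
      ∀ p ∈ P, ∀ q ∈ Q, g p q = 0 := by
  have : Invertible (2 : K) := invertibleOfNonzero two_ne_zero
  obtain ⟨v, hv⟩ := LinearMap.BilinForm.exists_orthogonal_basis hsymm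
  have hne : ∀ i, g (v i) (v i) ≠ 0 := hv.not_isOrtho_basis_self_of_separatingLeft hnd
  let s := {i | 0 < g (v i) (v i)}
  have hP := hv.posDefOn_span_image (s := s) fun _ hi => hi
  have hQ := hv.negDefOn_span_image (s := sᶜ) fun i hi => (not_lt.1 hi).lt_of_ne (hne i)
  have hspan : Submodule.span K (v '' s) ⊔ Submodule.span K (v '' sᶜ) = ⊤ := by
    rw [← Submodule.span_union, ← Set.image_union, Set.union_compl_self, Set.image_univ,
      v.span_eq]
  exact ⟨_, _, ⟨hP.disjoint hQ, codisjoint_iff.2 hspan⟩, hP, hQ,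
    fun _ hp _ hq => hv.apply_eq_zero_of_mem_span_image_compl hp hq⟩

end OrderedField

structure IsAlmostContactBMetric (φ : V →ₗ[K] V) (ξ : V) (η : V →ₗ[K] K)
    (g : V →ₗ[K] V →ₗ[K] K) : Prop where
  phi_phi : ∀ x, φ (φ x) = -x + η x • ξ
  eta_xi : η ξ = 1
  g_phi_phi : ∀ x y, g (φ x) (φ y) = -g x y + η x * η y

namespace IsAlmostContactBMetric

variable {φ : V →ₗ[K] V} {ξ : V} {η : V →ₗ[K] K} {g : V →ₗ[K] V →ₗ[K] K}

theorem xi_ne_zero (h : IsAlmostContactBMetric φ ξ η g) : ξ ≠ 0 := by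
  rintro rfl
  simpa using h.eta_xi

theorem phi_xi (h : IsAlmostContactBMetric φ ξ η g) : φ ξ = 0 := by
  have hφφξ : φ (φ ξ) = 0 := by rw [h.phi_phi, h.eta_xi, one_smul, neg_add_cancel]
  have hc : φ ξ = η (φ ξ) • ξ := by
    have := h.phi_phi (φ ξ)
    rw [hφφξ, map_zero] at this
    exact neg_add_eq_zero.1 this.symm
  have hc2 : (η (φ ξ) * η (φ ξ)) • ξ = 0 := by
    rw [← smul_smul, ← hc, ← map_smul, ← hc, hφφξ]
  rw [hc, mul_self_eq_zero.1 ((smul_eq_zero.1 hc2).resolve_right h.xi_ne_zero), zero_smul]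

theorem eta_phi (h : IsAlmostContactBMetric φ ξ η g) (x : V) : η (φ x) = 0 := by
  have hφ3 : φ (φ (φ x)) = -φ x := by
    rw [h.phi_phi x, map_add, map_neg, map_smul, h.phi_xi, smul_zero, add_zero]
  have := h.phi_phi (φ x)
  rw [hφ3, left_eq_add] at this
  exact (smul_eq_zero.1 this).resolve_right h.xi_ne_zero

theorem g_xi_left (h : IsAlmostContactBMetric φ ξ η g) (x : V) : g ξ x = η x := by
  have := h.g_phi_phi ξ x
  rw [h.phi_xi, map_zero, LinearMap.zero_apply, h.eta_xi, one_mul] at this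
  linear_combination this

theorem g_xi_right (h : IsAlmostContactBMetric φ ξ η g) (x : V) : g x ξ = η x := by
  have := h.g_phi_phi x ξ
  rw [h.phi_xi, map_zero, h.eta_xi, mul_one] at this
  linear_combination this

theorem disjoint_ker_eta_ker_phi (h : IsAlmostContactBMetric φ ξ η g) :
    Disjoint (ker η) (ker φ) := by
  rw [Submodule.disjoint_def]
  intro w hwη hwφ
  have := h.phi_phi w
  rw [mem_ker.1 hwφ, map_zero, mem_ker.1 hwη, zero_smul, add_zero] at this
  exact neg_eq_zero.1 this.symm

theorem finrank_map_phi (h : IsAlmostContactBMetric φ ξ η g) {W : Submodule K V}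
    (hW : W ≤ ker η) : finrank K (W.map φ) = finrank K W :=
  Submodule.finrank_map_eq_of_disjoint_ker (h.disjoint_ker_eta_ker_phi.mono_left hW)

theorem apply_smul_xi_add_phi (h : IsAlmostContactBMetric φ ξ η g) (a : K) {w : V}
    (hw : η w = 0) : g (a • ξ + φ w) (a • ξ + φ w) = a * a - g w w := by
  simp only [map_add, map_smul, LinearMap.add_apply, LinearMap.smul_apply, smul_eq_mul,
    h.g_xi_left, h.g_xi_right, h.eta_phi, h.g_phi_phi, h.eta_xi, hw]
  ring

section Definite

variable [LinearOrder K] [IsStrictOrderedRing K] {A B : Submodule K V}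

theorem negDefOn_map_phi (h : IsAlmostContactBMetric φ ξ η g) (hA : PosDefOn g A) :
    NegDefOn g ((A ⊓ ker η).map φ) := by
  rintro _ ⟨w, ⟨hwA, hwη⟩, rfl⟩ hw0
  have hw : w ≠ 0 := by
    rintro rfl
    exact hw0 (map_zero φ)
  rw [h.g_phi_phi, mem_ker.1 hwη, mul_zero, add_zero, neg_neg_iff_pos]
  exact hA w hwA hw

theorem posDefOn_span_xi_sup_map_phi (h : IsAlmostContactBMetric φ ξ η g)
    (hB : NegDefOn g B) : PosDefOn g (Submodule.span K {ξ} ⊔ (B ⊓ ker η).map φ) := by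
  intro x hx hx0
  obtain ⟨_, hy, _, ⟨w, ⟨hwB, hwη⟩, rfl⟩, rfl⟩ := Submodule.mem_sup.1 hx
  obtain ⟨a, rfl⟩ := Submodule.mem_span_singleton.1 hy
  rw [h.apply_smul_xi_add_phi a (mem_ker.1 hwη)]
  rcases eq_or_ne w 0 with rfl | hw
  · have ha : a ≠ 0 := by
      rintro rfl
      simp at hx0
    simpa using mul_self_pos.2 ha
  · nlinarith [mul_self_nonneg a, hB w hwB hw]

variable [FiniteDimensional K V]

theorem two_mul_finrank_le_of_posDefOn (h : IsAlmostContactBMetric φ ξ η g)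
    (hA : PosDefOn g A) : 2 * finrank K A ≤ finrank K V + 1 := by
  have h₁ := hA.finrank_add_finrank_le (h.negDefOn_map_phi hA)
  have h₂ := Submodule.finrank_le_finrank_inf_ker_add_one η A
  rw [h.finrank_map_phi inf_le_right] at h₁
  omega

theorem two_mul_finrank_le_of_negDefOn (h : IsAlmostContactBMetric φ ξ η g)
    (hB : NegDefOn g B) : 2 * finrank K B ≤ finrank K V := by
  have hMη : (B ⊓ ker η).map φ ≤ ker η := by
    rintro _ ⟨w, _, rfl⟩
    exact h.eta_phi w
  have hξM : Disjoint ((B ⊓ ker η).map φ) (Submodule.span K {ξ}) :=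
    Submodule.disjoint_span_singleton_of_notMem fun hξ => by simpa [h.eta_xi] using hMη hξ
  have h₁ := (h.posDefOn_span_xi_sup_map_phi hB).finrank_add_finrank_le hB
  have h₂ :=
    Submodule.finrank_sup_add_finrank_inf_eq (Submodule.span K {ξ}) ((B ⊓ ker η).map φ)
  rw [disjoint_iff.1 hξM.symm, finrank_bot, finrank_span_singleton h.xi_ne_zero,
    h.finrank_map_phi inf_le_right] at h₂
  have h₃ := Submodule.finrank_le_finrank_inf_ker_add_one η B
  omega

end Definite

end IsAlmostContactBMetric

end

/-- Let `V` be a `(2n+1)`-dimensional real vector space with an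
almost contact structure with B-metric `(φ, ξ₀, η, g)`, `g` nondegenerate.  Then `g`
has signature `(n + 1, n)`: there is a `g`-orthogonal direct sum decomposition
`V = P ⊕ Q` with `dim P = n + 1`, `dim Q = n`, `g` positive definite on `P` and
negative definite on `Q`. -/
theorem statement12 {V : Type*} [AddCommGroup V] [Module ℝ V] [FiniteDimensional ℝ V]
    (n : ℕ) (hdim : finrank ℝ V = 2 * n + 1)
    (φ : V →ₗ[ℝ] V) (ξ₀ : V) (η : V →ₗ[ℝ] ℝ)
    (g : V →ₗ[ℝ] V →ₗ[ℝ] ℝ)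
    (hsymm : ∀ x y : V, g x y = g y x)
    (hnd : ∀ x : V, (∀ y : V, g x y = 0) → x = 0)
    (hφ : ∀ x : V, φ (φ x) = -x + η x • ξ₀)
    (hη : η ξ₀ = 1)
    (hg : ∀ x y : V, g (φ x) (φ y) = -(g x y) + η x * η y) :
    ∃ P Q : Submodule ℝ V,
      P ⊓ Q = ⊥ ∧ P ⊔ Q = ⊤ ∧
      finrank ℝ P = n + 1 ∧ finrank ℝ Q = n ∧
      (∀ p ∈ P, p ≠ 0 → 0 < g p p) ∧
      (∀ q ∈ Q, q ≠ 0 → g q q < 0) ∧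
      (∀ p ∈ P, ∀ q ∈ Q, g p q = 0) := by
  have hacs : IsAlmostContactBMetric φ ξ₀ η g := ⟨hφ, hη, hg⟩
  obtain ⟨P, Q, hPQ, hP, hQ, horth⟩ :=
    LinearMap.IsSymm.exists_isCompl_posDefOn_negDefOn (g := g) ⟨hsymm⟩ hnd
  have hsum := Submodule.finrank_add_eq_of_isCompl hPQ
  have hPle := hacs.two_mul_finrank_le_of_posDefOn hP
  have hQle := hacs.two_mul_finrank_le_of_negDefOn hQ
  exact ⟨P, Q, hPQ.inf_eq_bot, hPQ.sup_eq_top, by omega, by omega, hP, hQ, horth⟩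
end
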